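/- In the weak Hopf algebra H = End_k(A)⊗U, the pair (Θ, Θ̄) with Θ = Σ_{λ,μ∈T} E_{λ,λ+μ}⊗E_{λλ}P_μ and Θ̄ = Σ_{λ,μ∈T} E_{λ+μ,λ}⊗E_{λλ}P_μ is a twist for H: Θ = Δ_H(1)Θ, Θ̄ = Θ̄Δ_H(1), ΘΘ̄ = Δ_H(1), (ε_H⊗id)Θ = (id⊗ε_H)Θ = (ε_H⊗id)Θ̄ = (id⊗ε_H)Θ̄ = 1, (Δ_H⊗id)(Θ)(Θ⊗1) = (id⊗Δ_H)(Θ)(1⊗Θ), (Θ̄⊗1)(Δ_H⊗id)(Θ̄) = (1⊗Θ̄)(id⊗Δ_H)(Θ̄), (Δ_H⊗id)(Θ̄)(id⊗Δ_H)(Θ) = (Θ⊗1)(1⊗Θ̄), and (id⊗Δ_H)(Θ̄)(Δ_H⊗id)(Θ) = (1⊗Θ)(Θ̄⊗1). -/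

import Mathlib

open TensorProduct

noncomputable section

namespace WHA

variable (k B : Type*) [Field k] [Ring B] [Algebra k B]

/-- `x ↦ x ⊗ 1`, the embedding of `B ⊗ B` into legs 1,2 of `B ⊗ B ⊗ B`. -/
def leg12 : B ⊗[k] B →ₗ[k] B ⊗[k] (B ⊗[k] B) :=
  (TensorProduct.assoc k B B B).toLinearMap ∘ₗ (TensorProduct.mk k (B ⊗[k] B) B).flip 1

/-- `x ↦ 1 ⊗ x`, the embedding of `B ⊗ B` into legs 2,3 of `B ⊗ B ⊗ B`. -/
def leg23 : B ⊗[k] B →ₗ[k] B ⊗[k] (B ⊗[k] B) :=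
  TensorProduct.mk k B (B ⊗[k] B) 1

/-- `a ⊗ b ↦ a ⊗ 1 ⊗ b`, the embedding of `B ⊗ B` into legs 1,3 of `B ⊗ B ⊗ B`. -/
def leg13 : B ⊗[k] B →ₗ[k] B ⊗[k] (B ⊗[k] B) :=
  TensorProduct.map LinearMap.id (TensorProduct.mk k B B 1)

/-- `Δ ⊗ id`, landing in the right-associated triple tensor product. -/
def ext12 (Δ : B →ₗ[k] B ⊗[k] B) : B ⊗[k] B →ₗ[k] B ⊗[k] (B ⊗[k] B) :=
  (TensorProduct.assoc k B B B).toLinearMap ∘ₗ TensorProduct.map Δ LinearMap.id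

/-- `id ⊗ Δ`. -/
def ext23 (Δ : B →ₗ[k] B ⊗[k] B) : B ⊗[k] B →ₗ[k] B ⊗[k] (B ⊗[k] B) :=
  TensorProduct.map LinearMap.id Δ

/-- `(ε ⊗ id)` composed with the canonical isomorphism `k ⊗ B ≅ B`. -/
def epsL (ε : B →ₗ[k] k) : B ⊗[k] B →ₗ[k] B :=
  (TensorProduct.lid k B).toLinearMap ∘ₗ TensorProduct.map ε LinearMap.id

/-- `(id ⊗ ε)` composed with the canonical isomorphism `B ⊗ k ≅ B`. -/
def epsR (ε : B →ₗ[k] k) : B ⊗[k] B →ₗ[k] B :=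
  (TensorProduct.rid k B).toLinearMap ∘ₗ TensorProduct.map LinearMap.id ε

/-- Pairing of two linear functionals against an element of `B ⊗ B`. -/
def pairF (φ ψ : B →ₗ[k] k) : B ⊗[k] B →ₗ[k] k :=
  (TensorProduct.lid k k).toLinearMap ∘ₗ TensorProduct.map φ ψ

/-- The multiplication map `B ⊗ B → B`. -/
def mul2 : B ⊗[k] B →ₗ[k] B := LinearMap.mul' k B

end WHA

namespace DQG

variable (k : Type*) [Field k]
variable (T : Type*) [AddCommGroup T] [Fintype T] [DecidableEq T]
variable (U : Type*) [Ring U] [HopfAlgebra k U]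

/-- The matrix units `E_{λμ}`. -/
def E (l m : T) : Matrix T T k := Matrix.single l m 1

/-- The `(λ,μ)` matrix entry, as a linear functional. -/
def entry (l m : T) : Matrix T T k →ₗ[k] k where
  toFun A := A l m
  map_add' _ _ := rfl
  map_smul' _ _ := rfl

/-- The comultiplication of `End_k(A)`: `Δ(E_{λμ}) = E_{λμ} ⊗ E_{λμ}`. -/
def ΔM : Matrix T T k →ₗ[k] Matrix T T k ⊗[k] Matrix T T k :=
  ∑ l : T, ∑ m : T, (entry k T l m).smulRight (E k T l m ⊗ₜ[k] E k T l m)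

/-- The counit of `End_k(A)`: `ε(E_{λμ}) = 1`. -/
def εM : Matrix T T k →ₗ[k] k := ∑ l : T, ∑ m : T, entry k T l m

/-- The antipode of `End_k(A)`: `S(E_{λμ}) = E_{μλ}`. -/
def SM : Matrix T T k →ₗ[k] Matrix T T k :=
  ∑ l : T, ∑ m : T, (entry k T l m).smulRight (E k T m l)

/-- The comultiplication of the tensor product weak Hopf algebra `H = End_k(A) ⊗ U`. -/
def ΔH : (Matrix T T k ⊗[k] U) →ₗ[k] (Matrix T T k ⊗[k] U) ⊗[k] (Matrix T T k ⊗[k] U) :=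
  (TensorProduct.tensorTensorTensorComm k (Matrix T T k) (Matrix T T k) U U).toLinearMap ∘ₗ
    TensorProduct.map (ΔM k T) Coalgebra.comul

/-- The counit of `H = End_k(A) ⊗ U`. -/
def εH : (Matrix T T k ⊗[k] U) →ₗ[k] k :=
  (TensorProduct.lid k k).toLinearMap ∘ₗ TensorProduct.map (εM k T) Coalgebra.counit

/-- The antipode of `H = End_k(A) ⊗ U`. -/
def SH : (Matrix T T k ⊗[k] U) →ₗ[k] (Matrix T T k ⊗[k] U) :=
  TensorProduct.map (SM k T) (HopfAlgebra.antipode (R := k))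

set_option maxHeartbeats 1000000 in
/-- The canonical ring structure on the triple tensor power of `H = End_k(A) ⊗ U`
(made explicit to help instance resolution). -/
instance triRing : Ring ((Matrix T T k ⊗[k] U) ⊗[k] ((Matrix T T k ⊗[k] U) ⊗[k] (Matrix T T k ⊗[k] U))) := by
  exact Algebra.TensorProduct.instRing (R := k) (A := Matrix T T k ⊗[k] U)
    (B := (Matrix T T k ⊗[k] U) ⊗[k] (Matrix T T k ⊗[k] U))

variable (P : T → U)

/-- The hypotheses on the system of idempotents `{P_μ}` spanning the abelian Hopf
subalgebra `A ⊆ U`. -/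
structure IsPSystem : Prop where
  orth : ∀ m n : T, P m * P n = if m = n then P m else 0
  sum_one : ∑ m : T, P m = 1
  comul_P : ∀ m : T, Coalgebra.comul (R := k) (P m) = ∑ n : T, P n ⊗ₜ[k] P (m - n)
  counit_P : ∀ m : T, Coalgebra.counit (R := k) (P m) = if m = 0 then (1 : k) else 0
  antipode_P : ∀ m : T, HopfAlgebra.antipode (R := k) (P m) = P (-m)

/-- The element `Θ = Σ_{λμ} E_{λ,λ+μ} ⊗ E_{λλ}P_μ` of `H ⊗ H`. -/
def Θ : (Matrix T T k ⊗[k] U) ⊗[k] (Matrix T T k ⊗[k] U) :=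
  ∑ l : T, ∑ m : T, ((E k T l (l + m)) ⊗ₜ[k] (1 : U)) ⊗ₜ[k] ((E k T l l) ⊗ₜ[k] P m)

/-- The element `Θ̄ = Σ_{λμ} E_{λ+μ,λ} ⊗ E_{λλ}P_μ` of `H ⊗ H`. -/
def Θbar : (Matrix T T k ⊗[k] U) ⊗[k] (Matrix T T k ⊗[k] U) :=
  ∑ l : T, ∑ m : T, ((E k T (l + m) l) ⊗ₜ[k] (1 : U)) ⊗ₜ[k] ((E k T l l) ⊗ₜ[k] P m)

/-- `u ⊗ v ↦ (E_{λλ} ⊗ u) ⊗ (E_{λλ} ⊗ v)`. -/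
def embAt (l : T) : U ⊗[k] U →ₗ[k] (Matrix T T k ⊗[k] U) ⊗[k] (Matrix T T k ⊗[k] U) :=
  TensorProduct.map (TensorProduct.mk k (Matrix T T k) U (E k T l l))
    (TensorProduct.mk k (Matrix T T k) U (E k T l l))

/-- The embedding `J ↦ Ĵ = Σ_λ E_{λλ}J⁽¹⁾(λ) ⊗ E_{λλ}J⁽²⁾(λ)` of a
`U ⊗ U`-valued function on `T` into `H ⊗ H`. -/
def emb (J : T → U ⊗[k] U) : (Matrix T T k ⊗[k] U) ⊗[k] (Matrix T T k ⊗[k] U) := ∑ l : T, embAt k T U l (J l)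

/-- `x = a ⊗ b ↦ a ⊗ b ⊗ P_μ ∈ U ⊗ U ⊗ U`. -/
def withP (m : T) : U ⊗[k] U →ₗ[k] U ⊗[k] (U ⊗[k] U) :=
  TensorProduct.map LinearMap.id ((TensorProduct.mk k U U).flip (P m))

/-- `x ↦ P_μ ⊗ x ∈ U ⊗ U ⊗ U`. -/
def withPleft (m : T) : U ⊗[k] U →ₗ[k] U ⊗[k] (U ⊗[k] U) :=
  TensorProduct.mk k U (U ⊗[k] U) (P m)

/-- `J` is a dynamical twist for `U`, with pointwise inverse `Jbar`. -/
structure IsDynTwist (J Jbar : T → U ⊗[k] U) : Prop where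
  inv_right : ∀ l : T, J l * Jbar l = 1
  inv_left : ∀ l : T, Jbar l * J l = 1
  zero_weight : ∀ l m : T,
    J l * Coalgebra.comul (R := k) (P m) = Coalgebra.comul (R := k) (P m) * J l
  counit_left : ∀ l : T, WHA.epsL k U Coalgebra.counit (J l) = 1
  counit_right : ∀ l : T, WHA.epsR k U Coalgebra.counit (J l) = 1
  dyn : ∀ l : T,
    WHA.ext12 k U Coalgebra.comul (J l) * (∑ m : T, withP k T U P m (J (l + m)))
      = WHA.ext23 k U Coalgebra.comul (J l) * WHA.leg23 k U (J l)

end DQG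

/-!
On pure tensors the comultiplication of `H` is `Δ_H(E_{λμ} ⊗ u) = Σ (E_{λμ} ⊗ u₁) ⊗ (E_{λμ} ⊗ u₂)`,
so every side of every identity expands into a finite sum of pure tensors of matrix units and
idempotents. The products `E_{ab}E_{cd} = δ_{bc}E_{ad}` and `P_mP_n = δ_{mn}P_m` then collapse all
but three summation indices, provided `Θ̄` is written as `Σ_{a,r} E_{ra} ⊗ E_{aa}P_{r-a}` and
`Δ(P_n)` as `Σ_v P_{n-v} ⊗ P_v`, so that each Kronecker delta equates a summation index with an
expression in the others. The two sides are then the same triple sum up to a change of variables in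
`T`.
-/

theorem TensorProduct.tensorTensorTensorComm_tmul_eq_map_mk {R M N P Q : Type*}
    [CommSemiring R] [AddCommMonoid M] [AddCommMonoid N] [AddCommMonoid P] [AddCommMonoid Q]
    [Module R M] [Module R N] [Module R P] [Module R Q] (x : M) (y : N) (z : P ⊗[R] Q) :
    tensorTensorTensorComm R M N P Q ((x ⊗ₜ y) ⊗ₜ z) = map (mk R M P x) (mk R N Q y) z := by
  induction z using TensorProduct.induction_on with
  | zero => simp
  | tmul p q => simp
  | add p q hp hq => simp only [tmul_add, map_add, hp, hq]

namespace WHA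

variable {k B : Type*} [Field k] [Ring B] [Algebra k B]

theorem leg12_tmul (x y : B) : leg12 k B (x ⊗ₜ y) = x ⊗ₜ (y ⊗ₜ 1) := rfl

theorem leg23_apply (z : B ⊗[k] B) : leg23 k B z = 1 ⊗ₜ z := rfl

theorem ext12_tmul (Δ : B →ₗ[k] B ⊗[k] B) (x y : B) :
    ext12 k B Δ (x ⊗ₜ y) = TensorProduct.assoc k B B B (Δ x ⊗ₜ y) := rfl

theorem ext23_tmul (Δ : B →ₗ[k] B ⊗[k] B) (x y : B) : ext23 k B Δ (x ⊗ₜ y) = x ⊗ₜ Δ y := rfl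

theorem epsL_tmul (ε : B →ₗ[k] k) (x y : B) : epsL k B ε (x ⊗ₜ y) = ε x • y := rfl

theorem epsR_tmul (ε : B →ₗ[k] k) (x y : B) : epsR k B ε (x ⊗ₜ y) = ε y • x := rfl

end WHA

namespace DQG

variable {k : Type*} [Field k] {T : Type*}

theorem entry_apply (a b : T) (A : Matrix T T k) : entry k T a b A = A a b := rfl

variable [Fintype T] [DecidableEq T]

theorem E_mul_E (a b c d : T) :
    E k T a b * E k T c d = if b = c then E k T a d else 0 := by
  split_ifs with h
  · subst h; simp [E]
  · simp [E, h]

theorem sum_E_self : ∑ l : T, E k T l l = 1 := by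
  ext i j
  simp [E, Matrix.sum_apply, Matrix.single_apply, Matrix.one_apply, ite_and]

theorem ΔM_E (a b : T) : ΔM k T (E k T a b) = E k T a b ⊗ₜ E k T a b := by
  simp [ΔM, entry_apply, E, Matrix.single_apply, ite_and]

theorem εM_E (a b : T) : εM k T (E k T a b) = 1 := by
  simp [εM, entry_apply, E, Matrix.single_apply, ite_and]

variable {U : Type*} [Ring U] [HopfAlgebra k U]

local notation "𝓗" => Matrix T T k ⊗[k] U

theorem ΔH_E_tmul (a b : T) (u : U) :
    ΔH k T U (E k T a b ⊗ₜ u) =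
      map (mk k (Matrix T T k) U (E k T a b)) (mk k (Matrix T T k) U (E k T a b))
        (Coalgebra.comul (R := k) u) := by
  simp only [ΔH, LinearMap.comp_apply, map_tmul, ΔM_E, LinearEquiv.coe_coe,
    tensorTensorTensorComm_tmul_eq_map_mk]

theorem ΔH_E_tmul_one (a b : T) :
    ΔH k T U (E k T a b ⊗ₜ 1) = (E k T a b ⊗ₜ 1) ⊗ₜ (E k T a b ⊗ₜ 1) := by
  rw [ΔH_E_tmul, Bialgebra.comul_one, Algebra.TensorProduct.one_def, map_tmul]
  rfl

theorem εH_E_tmul (a b : T) (u : U) :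
    εH k T U (E k T a b ⊗ₜ u) = Coalgebra.counit (R := k) u := by
  simp [εH, εM_E]

theorem one_eq_sum_E_tmul_one : (1 : 𝓗) = ∑ l : T, E k T l l ⊗ₜ 1 := by
  rw [← sum_tmul, sum_E_self, Algebra.TensorProduct.one_def]

theorem ΔH_one : ΔH k T U 1 = ∑ l : T, (E k T l l ⊗ₜ 1) ⊗ₜ (E k T l l ⊗ₜ 1) := by
  simp only [one_eq_sum_E_tmul_one, map_sum, ΔH_E_tmul_one]

variable [AddCommGroup T] {P : T → U}

theorem ΔH_E_tmul_P (hP : IsPSystem k T U P) (a b n : T) :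
    ΔH k T U (E k T a b ⊗ₜ P n) = ∑ v : T, (E k T a b ⊗ₜ P (n - v)) ⊗ₜ (E k T a b ⊗ₜ P v) := by
  simp only [ΔH_E_tmul, hP.comul_P, map_sum, map_tmul, mk_apply]
  exact Fintype.sum_equiv (Equiv.subLeft n) _ _ fun v => by simp

theorem Θbar_eq_sum :
    Θbar k T U P = ∑ a : T, ∑ r : T, (E k T r a ⊗ₜ 1) ⊗ₜ (E k T a a ⊗ₜ P (r - a)) :=
  Finset.sum_congr rfl fun a _ => Fintype.sum_equiv (Equiv.addLeft a) _ _ fun m => by simp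

theorem ΔH_one_mul_Θ : ΔH k T U 1 * Θ k T U P = Θ k T U P := by
  -- `Finset.sum_mul` does not unify on `𝓗 ⊗[k] 𝓗` unless its ring is named
  simp only [ΔH_one, Θ, Finset.sum_mul (R := 𝓗 ⊗[k] 𝓗), Finset.mul_sum (R := 𝓗 ⊗[k] 𝓗),
    Algebra.TensorProduct.tmul_mul_tmul, E_mul_E, one_mul, ite_tmul, tmul_ite, Finset.sum_ite_irrel,
    Finset.sum_const_zero, Finset.sum_ite_eq, Finset.mem_univ, if_true]

theorem Θbar_mul_ΔH_one : Θbar k T U P * ΔH k T U 1 = Θbar k T U P := by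
  simp only [ΔH_one, Θbar, Finset.sum_mul (R := 𝓗 ⊗[k] 𝓗), Finset.mul_sum (R := 𝓗 ⊗[k] 𝓗),
    Algebra.TensorProduct.tmul_mul_tmul, E_mul_E, mul_one, ite_tmul, tmul_ite,
    Finset.sum_ite_eq, Finset.mem_univ, if_true]

theorem Θ_mul_Θbar (hP : IsPSystem k T U P) : Θ k T U P * Θbar k T U P = ΔH k T U 1 := by
  -- distributing the left factor first puts the right factor's indices innermost, where the
  -- Kronecker deltas of the products are resolved by `Finset.sum_ite_eq`
  simp only [ΔH_one, Θ, Θbar, Finset.sum_mul (R := 𝓗 ⊗[k] 𝓗)]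
  simp only [Finset.mul_sum (R := 𝓗 ⊗[k] 𝓗)]
  simp +contextual only [Algebra.TensorProduct.tmul_mul_tmul, E_mul_E, hP.orth, one_mul, ite_tmul,
    tmul_ite, Finset.sum_ite_eq, if_true, ← tmul_sum, hP.sum_one]

theorem epsL_Θ (hP : IsPSystem k T U P) : WHA.epsL k 𝓗 (εH k T U) (Θ k T U P) = 1 := by
  simp only [Θ, map_sum, WHA.epsL_tmul, εH_E_tmul, Bialgebra.counit_one, one_smul, ← tmul_sum,
    hP.sum_one, one_eq_sum_E_tmul_one]

theorem epsR_Θ (hP : IsPSystem k T U P) : WHA.epsR k 𝓗 (εH k T U) (Θ k T U P) = 1 := by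
  simp only [Θ, map_sum, WHA.epsR_tmul, εH_E_tmul, hP.counit_P, ite_smul, one_smul, zero_smul,
    Finset.sum_ite_eq', Finset.mem_univ, if_true, add_zero, one_eq_sum_E_tmul_one]

theorem epsL_Θbar (hP : IsPSystem k T U P) : WHA.epsL k 𝓗 (εH k T U) (Θbar k T U P) = 1 := by
  simp only [Θbar, map_sum, WHA.epsL_tmul, εH_E_tmul, Bialgebra.counit_one, one_smul, ← tmul_sum,
    hP.sum_one, one_eq_sum_E_tmul_one]

theorem epsR_Θbar (hP : IsPSystem k T U P) : WHA.epsR k 𝓗 (εH k T U) (Θbar k T U P) = 1 := by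
  simp only [Θbar, map_sum, WHA.epsR_tmul, εH_E_tmul, hP.counit_P, ite_smul, one_smul, zero_smul,
    Finset.sum_ite_eq', Finset.mem_univ, if_true, add_zero, one_eq_sum_E_tmul_one]

theorem ext12_Θ_mul_leg12_Θ (hP : IsPSystem k T U P) :
    WHA.ext12 k 𝓗 (ΔH k T U) (Θ k T U P) * WHA.leg12 k 𝓗 (Θ k T U P) =
      WHA.ext23 k 𝓗 (ΔH k T U) (Θ k T U P) * WHA.leg23 k 𝓗 (Θ k T U P) := by
  simp only [Θ, map_sum, WHA.ext12_tmul, WHA.ext23_tmul,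
    WHA.leg12_tmul, WHA.leg23_apply, ΔH_E_tmul_one, ΔH_E_tmul_P hP, assoc_tmul, tmul_sum,
    Finset.sum_mul]
  simp only [Finset.mul_sum]
  simp +contextual only [Algebra.TensorProduct.tmul_mul_tmul, E_mul_E, hP.orth, one_mul, mul_one,
    ite_tmul, tmul_ite, Finset.sum_ite_irrel, Finset.sum_const_zero, Finset.sum_ite_eq,
    Finset.mem_univ, if_true]
  refine Finset.sum_congr rfl fun l _ => ?_
  conv_rhs => rw [Finset.sum_comm]
  exact Finset.sum_congr rfl fun a _ =>
    Fintype.sum_equiv (Equiv.addLeft a) _ _ fun b => by simp [add_assoc]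

theorem leg12_Θbar_mul_ext12_Θbar (hP : IsPSystem k T U P) :
    WHA.leg12 k 𝓗 (Θbar k T U P) * WHA.ext12 k 𝓗 (ΔH k T U) (Θbar k T U P) =
      WHA.leg23 k 𝓗 (Θbar k T U P) * WHA.ext23 k 𝓗 (ΔH k T U) (Θbar k T U P) := by
  simp only [Θbar_eq_sum, map_sum, WHA.ext12_tmul, WHA.ext23_tmul,
    WHA.leg12_tmul, WHA.leg23_apply, ΔH_E_tmul_one, ΔH_E_tmul_P hP, assoc_tmul, tmul_sum,
    Finset.sum_mul]
  simp only [Finset.mul_sum]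
  simp +contextual only [Algebra.TensorProduct.tmul_mul_tmul, E_mul_E, hP.orth, one_mul, mul_one,
    ite_tmul, tmul_ite, Finset.sum_ite_irrel, Finset.sum_const_zero, Finset.sum_ite_eq,
    Finset.mem_univ, if_true]
  simp only [sub_sub_sub_cancel_right]
  conv_rhs => rw [Finset.sum_comm]
  exact Finset.sum_congr rfl fun _ _ => Finset.sum_comm

theorem ext12_Θbar_mul_ext23_Θ (hP : IsPSystem k T U P) :
    WHA.ext12 k 𝓗 (ΔH k T U) (Θbar k T U P) * WHA.ext23 k 𝓗 (ΔH k T U) (Θ k T U P) =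
      WHA.leg12 k 𝓗 (Θ k T U P) * WHA.leg23 k 𝓗 (Θbar k T U P) := by
  simp only [Θ, Θbar_eq_sum, map_sum, WHA.ext12_tmul, WHA.ext23_tmul,
    WHA.leg12_tmul, WHA.leg23_apply, ΔH_E_tmul_one, ΔH_E_tmul_P hP, assoc_tmul, tmul_sum,
    Finset.sum_mul]
  simp only [Finset.mul_sum]
  simp +contextual only [Algebra.TensorProduct.tmul_mul_tmul, E_mul_E, hP.orth, one_mul, mul_one,
    ite_tmul, tmul_ite, Finset.sum_ite_irrel, Finset.sum_const_zero, Finset.sum_ite_eq,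
    Finset.mem_univ, if_true]
  conv_rhs => enter [2, a]; rw [Finset.sum_comm]
  conv_rhs => rw [Finset.sum_comm]
  refine Finset.sum_congr rfl fun b _ => Finset.sum_congr rfl fun a _ =>
    Fintype.sum_equiv (Equiv.subRight (a - b)) _ _ fun y => ?_
  rw [Equiv.subRight_apply, show a + (y - (a - b)) = b + y by abel]

theorem ext23_Θbar_mul_ext12_Θ (hP : IsPSystem k T U P) :
    WHA.ext23 k 𝓗 (ΔH k T U) (Θbar k T U P) * WHA.ext12 k 𝓗 (ΔH k T U) (Θ k T U P) =
      WHA.leg23 k 𝓗 (Θ k T U P) * WHA.leg12 k 𝓗 (Θbar k T U P) := by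
  simp only [Θ, Θbar_eq_sum, map_sum, WHA.ext12_tmul, WHA.ext23_tmul,
    WHA.leg12_tmul, WHA.leg23_apply, ΔH_E_tmul_one, ΔH_E_tmul_P hP, assoc_tmul, tmul_sum,
    Finset.sum_mul]
  simp only [Finset.mul_sum]
  simp +contextual only [Algebra.TensorProduct.tmul_mul_tmul, E_mul_E, hP.orth, one_mul, mul_one,
    ite_tmul, tmul_ite, Finset.sum_ite_irrel, Finset.sum_const_zero, Finset.sum_ite_eq,
    Finset.mem_univ, if_true]
  simp only [sub_sub]
  exact Finset.sum_congr rfl fun _ _ => Finset.sum_comm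

end DQG

set_option maxHeartbeats 1000000 in
set_option synthInstance.maxHeartbeats 200000 in
/-- `(Θ, Θ̄)` is a twist for the weak Hopf algebra `H = End_k(A) ⊗ U`. -/
theorem theta_is_twist
    (k : Type*) [Field k]
    (T : Type*) [AddCommGroup T] [Fintype T] [DecidableEq T]
    (U : Type*) [Ring U] [HopfAlgebra k U]
    (P : T → U) (hP : DQG.IsPSystem k T U P)
    (Th Thb : (Matrix T T k ⊗[k] U) ⊗[k] (Matrix T T k ⊗[k] U))
    (hTh : Th = DQG.Θ k T U P) (hThb : Thb = DQG.Θbar k T U P) :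
    Th = DQG.ΔH k T U 1 * Th ∧
    Thb = Thb * DQG.ΔH k T U 1 ∧
    Th * Thb = DQG.ΔH k T U 1 ∧
    WHA.epsL k (Matrix T T k ⊗[k] U) (DQG.εH k T U) Th = 1 ∧
    WHA.epsR k (Matrix T T k ⊗[k] U) (DQG.εH k T U) Th = 1 ∧
    WHA.epsL k (Matrix T T k ⊗[k] U) (DQG.εH k T U) Thb = 1 ∧
    WHA.epsR k (Matrix T T k ⊗[k] U) (DQG.εH k T U) Thb = 1 ∧
    WHA.ext12 k (Matrix T T k ⊗[k] U) (DQG.ΔH k T U) Th * WHA.leg12 k (Matrix T T k ⊗[k] U) Th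
      = WHA.ext23 k (Matrix T T k ⊗[k] U) (DQG.ΔH k T U) Th * WHA.leg23 k (Matrix T T k ⊗[k] U) Th ∧
    WHA.leg12 k (Matrix T T k ⊗[k] U) Thb * WHA.ext12 k (Matrix T T k ⊗[k] U) (DQG.ΔH k T U) Thb
      = WHA.leg23 k (Matrix T T k ⊗[k] U) Thb * WHA.ext23 k (Matrix T T k ⊗[k] U) (DQG.ΔH k T U) Thb ∧
    WHA.ext12 k (Matrix T T k ⊗[k] U) (DQG.ΔH k T U) Thb * WHA.ext23 k (Matrix T T k ⊗[k] U) (DQG.ΔH k T U) Th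
      = WHA.leg12 k (Matrix T T k ⊗[k] U) Th * WHA.leg23 k (Matrix T T k ⊗[k] U) Thb ∧
    WHA.ext23 k (Matrix T T k ⊗[k] U) (DQG.ΔH k T U) Thb * WHA.ext12 k (Matrix T T k ⊗[k] U) (DQG.ΔH k T U) Th
      = WHA.leg23 k (Matrix T T k ⊗[k] U) Th * WHA.leg12 k (Matrix T T k ⊗[k] U) Thb := by
  subst hTh hThb
  exact ⟨DQG.ΔH_one_mul_Θ.symm, DQG.Θbar_mul_ΔH_one.symm, DQG.Θ_mul_Θbar hP, DQG.epsL_Θ hP,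
    DQG.epsR_Θ hP, DQG.epsL_Θbar hP, DQG.epsR_Θbar hP, DQG.ext12_Θ_mul_leg12_Θ hP,
    DQG.leg12_Θbar_mul_ext12_Θbar hP, DQG.ext12_Θbar_mul_ext23_Θ hP, DQG.ext23_Θbar_mul_ext12_Θ hP⟩
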